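/- arXiv:0708.3562 — 2 statements merged into one kernel-verified Lean document; each statement's English description precedes it below -/
import Mathlib

section
/- Under the hypotheses of the preceding claim, |P(g₋, g₊) - P(f₋, f₊)| ≤ max{ D_ε(g₊) + D_ε⁻(g₋), D_ε(g₊ - ε) + D_ε⁻(g₋ + ε) }, whenever ‖g± - f±‖_∞ ≤ ε. -/
open MeasureTheory

/-- The event that the path of `X` stays strictly between `a` and `b` on `[0,1]`. -/
def corridorEvent {Ω : Type*} (X : ℝ → Ω → ℝ) (a b : ℝ → ℝ) : Set Ω :=
  {ω | ∀ t ∈ Set.Icc (0 : ℝ) 1, a t < X t ω ∧ X t ω < b t}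

/-- The event that `X` stays strictly below `b` on `[0,1]`. -/
def belowEvent {Ω : Type*} (X : ℝ → Ω → ℝ) (b : ℝ → ℝ) : Set Ω :=
  {ω | ∀ t ∈ Set.Icc (0 : ℝ) 1, X t ω < b t}

/-- The event that `X` stays strictly above `a` on `[0,1]`. -/
def aboveEvent {Ω : Type*} (X : ℝ → Ω → ℝ) (a : ℝ → ℝ) : Set Ω :=
  {ω | ∀ t ∈ Set.Icc (0 : ℝ) 1, a t < X t ω}

/-- `D_ε(g) = P(-∞, g+ε) - P(-∞, g)`. -/
noncomputable def Deps {Ω : Type*} [MeasurableSpace Ω] (P : Measure Ω)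
    (X : ℝ → Ω → ℝ) (ε : ℝ) (g : ℝ → ℝ) : ℝ :=
  (P (belowEvent X (fun t => g t + ε))).toReal - (P (belowEvent X g)).toReal

/-- `D_ε⁻(g) = P(g-ε, ∞) - P(g, ∞)`. -/
noncomputable def DepsMinus {Ω : Type*} [MeasurableSpace Ω] (P : Measure Ω)
    (X : ℝ → Ω → ℝ) (ε : ℝ) (g : ℝ → ℝ) : ℝ :=
  (P (aboveEvent X (fun t => g t - ε))).toReal - (P (aboveEvent X g)).toReal

/-! A path that stays in the corridor `(a', b')` but leaves `(a, b)` must enter the strip between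
`b` and `b'` or the one between `a'` and `a`. For the corridor widened by `ε` these strips have
probabilities `D_ε(b)` and `D_ε⁻(a)`; applied to the sandwich
`P(g₋+ε, g₊-ε) ≤ P(f₋, f₊) ≤ P(g₋-ε, g₊+ε)` this bounds each side of `|P(g₋, g₊) - P(f₋, f₊)|`. -/

section Events

variable {Ω : Type*} (X : ℝ → Ω → ℝ)

theorem corridorEvent_mono {a b a' b' : ℝ → ℝ} (ha : ∀ t ∈ Set.Icc (0 : ℝ) 1, a t ≤ a' t)
    (hb : ∀ t ∈ Set.Icc (0 : ℝ) 1, b' t ≤ b t) :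
    corridorEvent X a' b' ⊆ corridorEvent X a b := fun _ hω t ht =>
  ⟨(ha t ht).trans_lt (hω t ht).1, (hω t ht).2.trans_le (hb t ht)⟩

theorem belowEvent_mono {b b' : ℝ → ℝ} (hb : ∀ t ∈ Set.Icc (0 : ℝ) 1, b t ≤ b' t) :
    belowEvent X b ⊆ belowEvent X b' := fun _ hω t ht => (hω t ht).trans_le (hb t ht)

theorem aboveEvent_mono {a a' : ℝ → ℝ} (ha : ∀ t ∈ Set.Icc (0 : ℝ) 1, a' t ≤ a t) :
    aboveEvent X a ⊆ aboveEvent X a' := fun _ hω t ht => (ha t ht).trans_lt (hω t ht)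

theorem corridorEvent_subset_union_strips (a b a' b' : ℝ → ℝ) :
    corridorEvent X a' b' ⊆ corridorEvent X a b ∪
      ((belowEvent X b' \ belowEvent X b) ∪ (aboveEvent X a' \ aboveEvent X a)) := by
  intro ω hω
  by_cases hin : ω ∈ corridorEvent X a b
  · exact Or.inl hin
  obtain ⟨t, ht, hexit⟩ : ∃ t ∈ Set.Icc (0 : ℝ) 1, ¬(a t < X t ω ∧ X t ω < b t) := by
    simpa only [corridorEvent, Set.mem_ofPred_eq, not_forall, exists_prop] using hin
  rcases not_and_or.mp hexit with hlow | hhigh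
  · exact Or.inr <| Or.inr ⟨fun s hs => (hω s hs).1, fun habove => hlow (habove t ht)⟩
  · exact Or.inr <| Or.inl ⟨fun s hs => (hω s hs).2, fun hbelow => hhigh (hbelow t ht)⟩

end Events

section Measures

variable {Ω : Type*} [MeasurableSpace Ω] (P : Measure Ω) [IsFiniteMeasure P] (X : ℝ → Ω → ℝ)

theorem measureReal_corridorEvent_sub_le (a b a' b' : ℝ → ℝ) :
    P.real (corridorEvent X a' b') - P.real (corridorEvent X a b) ≤
      P.real (belowEvent X b' \ belowEvent X b) + P.real (aboveEvent X a' \ aboveEvent X a) := by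
  have := calc
    P.real (corridorEvent X a' b')
      ≤ P.real (corridorEvent X a b ∪
          ((belowEvent X b' \ belowEvent X b) ∪ (aboveEvent X a' \ aboveEvent X a))) :=
        measureReal_mono (corridorEvent_subset_union_strips X a b a' b')
    _ ≤ P.real (corridorEvent X a b) +
          (P.real (belowEvent X b' \ belowEvent X b) + P.real (aboveEvent X a' \ aboveEvent X a)) :=
        (measureReal_union_le _ _).trans (by gcongr; exact measureReal_union_le _ _)
  linarith

variable {X} {ε : ℝ}

theorem deps_eq_measureReal_sdiff (hε : 0 ≤ ε) {g : ℝ → ℝ}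
    (hg : MeasurableSet (belowEvent X g)) :
    Deps P X ε g = P.real (belowEvent X (fun t => g t + ε) \ belowEvent X g) :=
  (measureReal_sdiff (belowEvent_mono X fun t _ => le_add_of_nonneg_right hε) hg).symm

theorem depsMinus_eq_measureReal_sdiff (hε : 0 ≤ ε) {g : ℝ → ℝ}
    (hg : MeasurableSet (aboveEvent X g)) :
    DepsMinus P X ε g = P.real (aboveEvent X (fun t => g t - ε) \ aboveEvent X g) :=
  (measureReal_sdiff (aboveEvent_mono X fun t _ => sub_le_self _ hε) hg).symm

theorem measureReal_corridorEvent_widen_sub_le (hε : 0 ≤ ε) {a b : ℝ → ℝ}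
    (ha : MeasurableSet (aboveEvent X a)) (hb : MeasurableSet (belowEvent X b)) :
    P.real (corridorEvent X (fun t => a t - ε) (fun t => b t + ε)) -
        P.real (corridorEvent X a b) ≤
      Deps P X ε b + DepsMinus P X ε a := by
  rw [deps_eq_measureReal_sdiff P hε hb, depsMinus_eq_measureReal_sdiff P hε ha]
  exact measureReal_corridorEvent_sub_le P X a b _ _

end Measures

theorem corridor_approximation_bound_general {Ω : Type*} [MeasurableSpace Ω] (P : Measure Ω)
    [IsProbabilityMeasure P] (X : ℝ → Ω → ℝ)
    (gplus gminus fplus fminus : ℝ → ℝ)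
    (ε : ℝ) (hε : 0 < ε)
    (hplus : ∀ t ∈ Set.Icc (0 : ℝ) 1, |gplus t - fplus t| ≤ ε)
    (hminus : ∀ t ∈ Set.Icc (0 : ℝ) 1, |gminus t - fminus t| ≤ ε)
    (hMeasBelow : ∀ b : ℝ → ℝ, MeasurableSet (belowEvent X b))
    (hMeasAbove : ∀ a : ℝ → ℝ, MeasurableSet (aboveEvent X a)) :
    |(P (corridorEvent X gminus gplus)).toReal -
        (P (corridorEvent X fminus fplus)).toReal| ≤
      max (Deps P X ε gplus + DepsMinus P X ε gminus)
        (Deps P X ε (fun t => gplus t - ε) + DepsMinus P X ε (fun t => gminus t + ε)) := by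
  have hf_inner : P.real (corridorEvent X (fun t => gminus t + ε) (fun t => gplus t - ε)) ≤
      P.real (corridorEvent X fminus fplus) :=
    measureReal_mono <| corridorEvent_mono X
      (fun t ht => by linarith [(abs_le.mp (hminus t ht)).1])
      (fun t ht => by linarith [(abs_le.mp (hplus t ht)).2])
  have hf_outer : P.real (corridorEvent X fminus fplus) ≤
      P.real (corridorEvent X (fun t => gminus t - ε) (fun t => gplus t + ε)) :=
    measureReal_mono <| corridorEvent_mono X
      (fun t ht => by linarith [(abs_le.mp (hminus t ht)).2])
      (fun t ht => by linarith [(abs_le.mp (hplus t ht)).1])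
  have hg_outer := measureReal_corridorEvent_widen_sub_le P hε.le (hMeasAbove gminus)
    (hMeasBelow gplus)
  have hg_inner := measureReal_corridorEvent_widen_sub_le P hε.le
    (hMeasAbove fun t => gminus t + ε) (hMeasBelow fun t => gplus t - ε)
  simp only [add_sub_cancel_right, sub_add_cancel] at hg_inner
  rw [← measureReal_def, ← measureReal_def, abs_sub_le_iff]
  exact ⟨le_max_of_le_right (by linarith), le_max_of_le_left (by linarith)⟩

/-- If `‖g± - f±‖ ≤ ε` then
`|P(g₋, g₊) - P(f₋, f₊)| ≤ max{D_ε(g₊) + D_ε⁻(g₋), D_ε(g₊-ε) + D_ε⁻(g₋+ε)}`. -/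
theorem corridor_approximation_bound {Ω : Type*} [MeasurableSpace Ω] (P : Measure Ω)
    [IsProbabilityMeasure P] (X : ℝ → Ω → ℝ) (x : ℝ) (hX0 : ∀ ω, X 0 ω = x)
    (gplus gminus fplus fminus : ℝ → ℝ)
    (hg : ∀ t ∈ Set.Icc (0 : ℝ) 1, gminus t < gplus t)
    (hx : gminus 0 < x ∧ x < gplus 0) (ε : ℝ) (hε : 0 < ε)
    (hplus : ∀ t ∈ Set.Icc (0 : ℝ) 1, |gplus t - fplus t| ≤ ε)
    (hminus : ∀ t ∈ Set.Icc (0 : ℝ) 1, |gminus t - fminus t| ≤ ε)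
    (hMeasCorr : ∀ a b : ℝ → ℝ, MeasurableSet (corridorEvent X a b))
    (hMeasBelow : ∀ b : ℝ → ℝ, MeasurableSet (belowEvent X b))
    (hMeasAbove : ∀ a : ℝ → ℝ, MeasurableSet (aboveEvent X a)) :
    |(P (corridorEvent X gminus gplus)).toReal -
        (P (corridorEvent X fminus fplus)).toReal| ≤
      max (Deps P X ε gplus + DepsMinus P X ε gminus)
        (Deps P X ε (fun t => gplus t - ε) + DepsMinus P X ε (fun t => gminus t + ε)) :=
  corridor_approximation_bound_general P X gplus gminus fplus fminus ε hε hplus hminus hMeasBelow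
    hMeasAbove
end

section
/- For the d-dimensional Bessel process transition density p_R(t,y,z) = z (z/y)^η t^{-1} e^{-(y²+z²)/(2t)} I_η(yz/t) with η = d/2 - 1, the function z ↦ p_R(t,y,z) is a probability density on (0,∞) for each fixed t > 0 and y > 0: ∫_0^∞ p_R(t,y,z) dz = 1. -/
/-!
Expanding `I_η` into its series, `p_R(t,y,·)` becomes the mixture, with the Poisson weights
`e^{-c} c^k / k!` of parameter `c = y²/(2t)`, of the densities of `√(2t G)` with `G` Gamma
distributed of shape `k + η + 1`. Each of these densities integrates to one by the Gamma integral,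
and the weights sum to one; since everything is nonnegative, integrating term by term is legitimate.
-/

open MeasureTheory Real

/-- The modified Bessel function of the first kind `I_η(x)` (for `x > 0`), given by its
series representation. -/
noncomputable def besselI (η x : ℝ) : ℝ :=
  ∑' k : ℕ, (x / 2) ^ (2 * (k : ℝ) + η) / ((Nat.factorial k : ℝ) * Real.Gamma ((k : ℝ) + η + 1))

/-- The transition density of the `d`-dimensional Bessel process. -/
noncomputable def besselTransitionDensity (η t y z : ℝ) : ℝ :=
  z * (z / y) ^ η * t⁻¹ * Real.exp (-(y ^ 2 + z ^ 2) / (2 * t)) * besselI η (y * z / t)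

open Set Nat

theorem integral_tsum_mul_of_integral_eq_one {α ι : Type*} [MeasurableSpace α] [Countable ι]
    {μ : Measure α} {w : ι → ℝ} {f : ι → α → ℝ} (hw : ∀ i, 0 ≤ w i) (hw_sum : Summable w)
    (hf : ∀ i, 0 ≤ᵐ[μ] f i) (hf_int : ∀ i, Integrable (f i) μ)
    (hf_one : ∀ i, ∫ x, f i x ∂μ = 1) :
    ∫ x, ∑' i, w i * f i x ∂μ = ∑' i, w i := by
  have integral_norm (i : ι) : ∫ x, ‖w i * f i x‖ ∂μ = w i := by
    rw [integral_congr_ae ((hf i).mono fun x hx => norm_of_nonneg (mul_nonneg (hw i) hx)),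
      integral_const_mul, hf_one, mul_one]
  rw [← integral_tsum_of_summable_integral_norm (fun i => (hf_int i).const_mul (w i))
    (by simpa only [integral_norm] using hw_sum)]
  simp only [integral_const_mul, hf_one, mul_one]

theorem hasSum_exp_neg_mul_pow_div_factorial (c : ℝ) :
    HasSum (fun k : ℕ => exp (-c) * (c ^ k / k !)) 1 := by
  simpa [← exp_eq_exp_ℝ, ← exp_add] using
    (NormedSpace.expSeries_div_hasSum_exp c).mul_left (exp (-c))

/-- The density of `√(2t G)` for `G` Gamma distributed with shape `a` and rate one. -/
noncomputable def chiDensity (a t z : ℝ) : ℝ :=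
  2 / ((2 * t) ^ a * Gamma a) * (z ^ (2 * a - 1) * exp (-(2 * t)⁻¹ * z ^ (2 : ℝ)))

section chiDensity

variable {a t : ℝ}

theorem chiDensity_nonneg (ha : 0 < a) (ht : 0 < t) {z : ℝ} (hz : 0 < z) :
    0 ≤ chiDensity a t z := by
  have := Gamma_pos_of_pos ha
  unfold chiDensity
  positivity

theorem integrableOn_chiDensity (ha : 0 < a) (ht : 0 < t) :
    IntegrableOn (chiDensity a t) (Ioi 0) :=
  (integrableOn_rpow_mul_exp_neg_mul_rpow (by linarith) two_pos (by positivity)).const_mul _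

theorem integral_chiDensity (ha : 0 < a) (ht : 0 < t) :
    ∫ z in Ioi 0, chiDensity a t z = 1 := by
  have h2t : 0 < 2 * t := by positivity
  simp only [chiDensity]
  rw [integral_const_mul, integral_rpow_mul_exp_neg_mul_rpow two_pos (by linarith)
    (by positivity), show (2 * a - 1 + 1) / 2 = a by ring, show -(2 * a - 1 + 1) / 2 = -a by ring,
    inv_rpow h2t.le, rpow_neg h2t.le, inv_inv]
  have := (Gamma_pos_of_pos ha).ne'
  have := (rpow_pos_of_pos h2t a).ne'
  field_simp

end chiDensity

section besselTransitionDensity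

variable {η t y : ℝ}

theorem besselTransitionDensity_eq_tsum (ht : 0 < t) (hy : 0 < y) {z : ℝ} (hz : 0 < z) :
    besselTransitionDensity η t y z =
      ∑' k : ℕ, exp (-(y ^ 2 / (2 * t))) * ((y ^ 2 / (2 * t)) ^ k / k !) *
        chiDensity (k + η + 1) t z := by
  rw [besselTransitionDensity, besselI, ← tsum_mul_left]
  congr 1 with k
  have h2t : 0 < 2 * t := by positivity
  -- Reduce every real power to `x ^ η` times a natural power, leaving a field identity in the
  -- atoms `y ^ η`, `z ^ η`, `(2 * t) ^ η`.
  rw [chiDensity, show y * z / t / 2 = y * z / (2 * t) by ring,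
    show 2 * ((k : ℝ) + η + 1) - 1 = η + η + ↑(2 * k + 1) by push_cast; ring,
    show 2 * (k : ℝ) + η = η + ↑(2 * k) by push_cast; ring,
    show (k : ℝ) + η + 1 = η + ↑(k + 1) by push_cast; ring,
    rpow_add_natCast hz.ne', rpow_add hz, rpow_add_natCast h2t.ne',
    rpow_add_natCast (by positivity), div_rpow hz.le hy.le, div_rpow (by positivity) h2t.le,
    mul_rpow hy.le hz.le, rpow_two,
    show -(y ^ 2 + z ^ 2) / (2 * t) = -(y ^ 2 / (2 * t)) + -(2 * t)⁻¹ * z ^ 2 by ring, exp_add]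
  have := (rpow_pos_of_pos hy η).ne'
  have := (rpow_pos_of_pos h2t η).ne'
  have := (rpow_pos_of_pos hz η).ne'
  have := ht.ne'
  simp only [div_pow]
  field_simp
  ring

theorem integral_besselTransitionDensity (hη : -1 < η) (ht : 0 < t) (hy : 0 < y) :
    ∫ z in Ioi 0, besselTransitionDensity η t y z = 1 := by
  have hshape (k : ℕ) : 0 < (k : ℝ) + η + 1 := by linarith [k.cast_nonneg (α := ℝ)]
  have hpoisson := hasSum_exp_neg_mul_pow_div_factorial (y ^ 2 / (2 * t))
  rw [setIntegral_congr_fun measurableSet_Ioi fun z hz => besselTransitionDensity_eq_tsum ht hy hz,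
    integral_tsum_mul_of_integral_eq_one (fun k => by positivity) hpoisson.summable
      (fun k => (ae_restrict_iff' measurableSet_Ioi).mpr
        (.of_forall fun z hz => chiDensity_nonneg (hshape k) ht hz))
      (fun k => integrableOn_chiDensity (hshape k) ht)
      (fun k => integral_chiDensity (hshape k) ht),
    hpoisson.tsum_eq]

end besselTransitionDensity

/-- For each `t > 0` and `y > 0`, `z ↦ p_R(t,y,z)` is a probability density on `(0,∞)`. -/
theorem besselTransitionDensity_integral_eq_one (d : ℕ) (hd : 1 ≤ d) (t y : ℝ)
    (ht : 0 < t) (hy : 0 < y) :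
    ∫ z in Set.Ioi (0 : ℝ), besselTransitionDensity ((d : ℝ) / 2 - 1) t y z = 1 := by
  have hd' : (1 : ℝ) ≤ d := mod_cast hd
  exact integral_besselTransitionDensity (by linarith) ht hy
end
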